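/- Let n = 2m for some m ∈ ℤ_{>0}, and fix a count vector v = (v₁₁, 1, 1, v₀₀) or v = (v₁₁, 0, 2, v₀₀) with entries summing to n. Then the probability mass function of T(v, Z) is symmetric–decreasing on the lattice m^{-1}ℤ. -/

import Mathlib

open Finset

/-- Real value of a binary outcome. -/
noncomputable def b2r (b : Bool) : ℝ := if b then 1 else 0

/-- All assignments of `n` subjects in which exactly `m` receive treatment. -/
def Assign (n m : ℕ) : Finset (Fin n → Bool) :=
  Finset.univ.filter fun z => (Finset.univ.filter fun i => z i = true).card = m

/-- Probability of the event `E` under the uniform distribution on `Assign n m`. -/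
noncomputable def Pr (n m : ℕ) (E : (Fin n → Bool) → Prop) : ℝ :=
  haveI : DecidablePred E := fun z => Classical.propDecidable (E z)
  (((Assign n m).filter E).card : ℝ) / ((Assign n m).card : ℝ)

/-- The sample average treatment effect `τ(w)`.  For a table `w`, `(w i).1` is the
control potential outcome `w_i(0)` and `(w i).2` is the treatment potential outcome
`w_i(1)`. -/
noncomputable def sate (n : ℕ) (w : Fin n → Bool × Bool) : ℝ :=
  (∑ j, (b2r (w j).2 - b2r (w j).1)) / (n : ℝ)

/-- Observed outcomes generated by the table `w` under the assignment `z`. -/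
def obsOutcome (n : ℕ) (w : Fin n → Bool × Bool) (z : Fin n → Bool) : Fin n → Bool :=
  fun j => if z j then (w j).2 else (w j).1

/-- The Neyman difference-in-means estimator `T(Y, z)`. -/
noncomputable def neyman (n m : ℕ) (Y z : Fin n → Bool) : ℝ :=
  (∑ j, if z j then b2r (Y j) else 0) / (m : ℝ)
    - (∑ j, if z j then 0 else b2r (Y j)) / ((n : ℝ) - (m : ℝ))

/-- Permutation `p`-value of the table `w` given observed data `(Y, z)`. -/
noncomputable def pval (n m : ℕ) (w : Fin n → Bool × Bool) (Y z : Fin n → Bool) : ℝ :=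
  Pr n m fun z' =>
    |neyman n m (obsOutcome n w z') z' - sate n w| ≥ |neyman n m Y z - sate n w|

/-- The table `w` is possible given the observed data `(Y, z)`. -/
def PossibleTable (n : ℕ) (w : Fin n → Bool × Bool) (Y z : Fin n → Bool) : Prop :=
  ∀ j, (z j = true → (w j).2 = Y j) ∧ (z j = false → (w j).1 = Y j)

/-- Lower endpoint `L_α` of the exact confidence interval `I_α`. -/
noncomputable def Lb (n m : ℕ) (α : ℝ) (Y z : Fin n → Bool) : ℝ :=
  sInf {t : ℝ | ∃ w, PossibleTable n w Y z ∧ α ≤ pval n m w Y z ∧ sate n w = t}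

/-- Upper endpoint `U_α` of the exact confidence interval `I_α`. -/
noncomputable def Ub (n m : ℕ) (α : ℝ) (Y z : Fin n → Bool) : ℝ :=
  sSup {t : ℝ | ∃ w, PossibleTable n w Y z ∧ α ≤ pval n m w Y z ∧ sate n w = t}

/-- `vcount n w a b` is the number of subjects whose treatment potential outcome is `a`
and whose control potential outcome is `b`; e.g. `vcount n w true false = v₁₀`. -/
def vcount (n : ℕ) (w : Fin n → Bool × Bool) (a b : Bool) : ℕ :=
  (Finset.univ.filter fun i => (w i).2 = a ∧ (w i).1 = b).card

/-- `ncount n Y z a b = n_{ab}`, the number of subjects with assignment `a` and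
observed outcome `b`. -/
def ncount (n : ℕ) (Y z : Fin n → Bool) (a b : Bool) : ℕ :=
  (Finset.univ.filter fun j => z j = a ∧ Y j = b).card

/-- The pmf of the Neyman estimator `T(w, Z)` under the uniform random assignment. -/
noncomputable def pmfT (n m : ℕ) (w : Fin n → Bool × Bool) : ℝ → ℝ :=
  fun t => Pr n m fun z => neyman n m (obsOutcome n w z) z = t

/-- The lattice `m⁻¹ ℤ ⊆ ℝ`. -/
def lattZ (m : ℕ) : Set ℝ := {x | ∃ k : ℤ, x = (k : ℝ) / (m : ℝ)}

/-- The lattice `m⁻¹ (2ℤ) ⊆ ℝ`. -/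
def lattEven (m : ℕ) : Set ℝ := {x | ∃ k : ℤ, x = (2 * (k : ℝ)) / (m : ℝ)}

/-- The lattice `m⁻¹ (2ℤ + 1) ⊆ ℝ`. -/
def lattOdd (m : ℕ) : Set ℝ := {x | ∃ k : ℤ, x = (2 * (k : ℝ) + 1) / (m : ℝ)}

/-- `f` is symmetric about `μ` and decreasing away from `μ` along the lattice `L`
(symmetric–decreasing, SD). -/
def SDon (f : ℝ → ℝ) (L : Set ℝ) (μ : ℝ) : Prop :=
  (∀ x : ℝ, μ + x ∈ L → f (μ - x) = f (μ + x)) ∧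
    ∀ x y : ℝ, 0 ≤ x → x ≤ y → μ + x ∈ L → μ + y ∈ L → f (μ + y) ≤ f (μ + x)

/-!
For the treated set `S` of `z`, `m * T(w, z) = 2 #(S ∩ P) + #(S ∩ Q) - ∑ⱼ wⱼ(0)`, where `P` holds
the subjects with outcomes `(1, 1)` and `Q` the two discordant ones. Replacing `z` by its
complement reflects `T(w, Z)` about `τ(w)`, which gives the symmetry. With `R` the remaining
subjects, the number of `S` with `2 #(S ∩ P) + #(S ∩ Q) = s` is the sum of
`C(#P, i) C(2, j) C(#R, k)` over `i + j + k = m`, `2 i + j = s`, so at most two terms; above the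
centre `#P + 1`, going one step further out is dominated term by term, by the unimodality of
binomial coefficients.
-/

theorem Nat.choose_le_choose_succ {n k : ℕ} (h : 2 * k + 1 ≤ n) :
    n.choose k ≤ n.choose (k + 1) := by
  refine Nat.le_of_mul_le_mul_right ?_ k.succ_pos
  rw [Nat.choose_succ_right_eq]
  exact Nat.mul_le_mul_left _ (by omega)

theorem Nat.choose_succ_le_choose {n k : ℕ} (h : n ≤ 2 * k + 1) :
    n.choose (k + 1) ≤ n.choose k := by
  refine Nat.le_of_mul_le_mul_right ?_ k.succ_pos
  rw [Nat.choose_succ_right_eq]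
  exact Nat.mul_le_mul_left _ (by omega)

section BlockCount

variable {α : Type*} [Fintype α] [DecidableEq α] {P Q : Finset α}

theorem card_inter_add_card_inter_add_card_inter_compl (hPQ : Disjoint P Q) (T : Finset α) :
    #(T ∩ P) + #(T ∩ Q) + #(T ∩ (P ∪ Q)ᶜ) = #T := by
  rw [← card_union_of_disjoint (disjoint_of_subset_left inter_subset_right
      (disjoint_of_subset_right inter_subset_right hPQ)),
    ← card_union_of_disjoint, ← inter_union_distrib_left, ← inter_union_distrib_left,
    union_compl, inter_univ]
  exact disjoint_of_subset_left (by rw [← inter_union_distrib_left]; exact inter_subset_right)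
    (disjoint_of_subset_right inter_subset_right disjoint_compl_right)

theorem union_inter_blocks (hPQ : Disjoint P Q) {U V W : Finset α} (hU : U ⊆ P) (hV : V ⊆ Q)
    (hW : W ⊆ (P ∪ Q)ᶜ) :
    (U ∪ V ∪ W) ∩ P = U ∧ (U ∪ V ∪ W) ∩ Q = V ∧ (U ∪ V ∪ W) ∩ (P ∪ Q)ᶜ = W := by
  have hPQ' := disjoint_left.1 hPQ
  refine ⟨?_, ?_, ?_⟩ <;> ext x <;> have := @hU x <;> have := @hV x <;> have := @hW x <;>
    have := @hPQ' x <;> simp only [mem_inter, mem_union, mem_compl] at * <;> tauto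

theorem card_filter_card_inter_eq (hPQ : Disjoint P Q) (i j k : ℕ) :
    #{T : Finset α | #(T ∩ P) = i ∧ #(T ∩ Q) = j ∧ #(T ∩ (P ∪ Q)ᶜ) = k}
      = (#P).choose i * (#Q).choose j * (#(P ∪ Q)ᶜ).choose k := by
  rw [← card_powersetCard, ← card_powersetCard, ← card_powersetCard, ← card_product,
    ← card_product]
  refine card_nbij' (fun T => ((T ∩ P, T ∩ Q), T ∩ (P ∪ Q)ᶜ)) (fun B => B.1.1 ∪ B.1.2 ∪ B.2)
    ?_ ?_ ?_ ?_
  · intro T hT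
    simp_all [mem_powersetCard]
  · rintro ⟨⟨U, V⟩, W⟩ hB
    simp only [coe_product, Set.mem_prod, mem_coe, mem_powersetCard] at hB
    obtain ⟨⟨⟨hU, rfl⟩, hV, rfl⟩, hW, rfl⟩ := hB
    simp only [mem_coe, mem_filter, mem_univ, true_and, union_inter_blocks hPQ hU hV hW]
  · intro T _
    simp only
    rw [← inter_union_distrib_left, ← inter_union_distrib_left, union_compl, inter_univ]
  · rintro ⟨⟨U, V⟩, W⟩ hB
    simp only [coe_product, Set.mem_prod, mem_coe, mem_powersetCard] at hB
    obtain ⟨⟨⟨hU, -⟩, hV, -⟩, hW, -⟩ := hB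
    simp only [union_inter_blocks hPQ hU hV hW]

def score (P Q T : Finset α) : ℕ := 2 * #(T ∩ P) + #(T ∩ Q)

def scoreCount (P Q : Finset α) (m s : ℕ) : ℕ := #{T : Finset α | #T = m ∧ score P Q T = s}

theorem scoreCount_eq_zero_of_lt (hPQ : Disjoint P Q) {m s : ℕ} (hs : 2 * m < s) :
    scoreCount P Q m s = 0 := by
  refine card_eq_zero.2 (filter_eq_empty_iff.2 fun T _ ⟨hT, hsT⟩ => ?_)
  have := card_inter_add_card_inter_add_card_inter_compl hPQ T
  rw [score] at hsT
  omega

theorem scoreCount_two_mul_add_one (hPQ : Disjoint P Q) (hQ : #Q = 2) {m t k : ℕ}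
    (h : t + 1 + k = m) :
    scoreCount P Q m (2 * t + 1) = (#P).choose t * 2 * (#(P ∪ Q)ᶜ).choose k := by
  have hblocks := card_filter_card_inter_eq hPQ t 1 k
  rw [hQ, Nat.choose_one_right] at hblocks
  rw [scoreCount, ← hblocks]
  refine congrArg card (filter_congr fun T _ => ?_)
  have := card_inter_add_card_inter_add_card_inter_compl hPQ T
  have : #(T ∩ Q) ≤ 2 := hQ ▸ card_le_card inter_subset_right
  rw [score]
  omega

theorem scoreCount_two_mul_add_two (hPQ : Disjoint P Q) (hQ : #Q = 2) {m t k : ℕ}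
    (h : t + 2 + k = m) :
    scoreCount P Q m (2 * t + 2) = (#P).choose (t + 1) * (#(P ∪ Q)ᶜ).choose (k + 1)
      + (#P).choose t * (#(P ∪ Q)ᶜ).choose k := by
  have hblocks₀ := card_filter_card_inter_eq hPQ (t + 1) 0 (k + 1)
  have hblocks₂ := card_filter_card_inter_eq hPQ t 2 k
  rw [hQ, Nat.choose_zero_right, mul_one] at hblocks₀
  rw [hQ, Nat.choose_self, mul_one] at hblocks₂
  rw [scoreCount, ← hblocks₀, ← hblocks₂, ← card_union_of_disjoint
    (disjoint_filter.2 fun T _ h₀ h₂ => by omega), ← filter_or]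
  refine congrArg card (filter_congr fun T _ => ?_)
  have := card_inter_add_card_inter_add_card_inter_compl hPQ T
  have : #(T ∩ Q) ≤ 2 := hQ ▸ card_le_card inter_subset_right
  rw [score]
  omega

theorem scoreCount_two_mul (hPQ : Disjoint P Q) (m : ℕ) :
    scoreCount P Q m (2 * m) = (#P).choose m := by
  have hblocks := card_filter_card_inter_eq hPQ m 0 0
  simp only [Nat.choose_zero_right, mul_one] at hblocks
  rw [scoreCount, ← hblocks]
  refine congrArg card (filter_congr fun T _ => ?_)
  have := card_inter_add_card_inter_add_card_inter_compl hPQ T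
  rw [score]
  omega

theorem scoreCount_succ_le (hPQ : Disjoint P Q) (hQ : #Q = 2) {m s : ℕ}
    (hα : Fintype.card α = 2 * m) (hs : #P + 1 ≤ s) :
    scoreCount P Q m (s + 1) ≤ scoreCount P Q m s := by
  have hr := card_inter_add_card_inter_add_card_inter_compl hPQ univ
  rw [univ_inter, univ_inter, univ_inter, card_univ, hQ, hα] at hr
  rcases lt_or_ge (2 * m) (s + 1) with hbig | hle
  · rw [scoreCount_eq_zero_of_lt hPQ hbig]
    exact Nat.zero_le _
  -- Each of the two terms at an even level dominates one of the two equal halves of the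
  -- neighbouring odd level.
  obtain ⟨t, rfl | rfl⟩ := Nat.even_or_odd' s
  · obtain ⟨t, rfl⟩ : ∃ t', t = t' + 1 := ⟨t - 1, by omega⟩
    rw [scoreCount_two_mul_add_one hPQ hQ (k := m - 2 - t) (by omega),
      show 2 * (t + 1) = 2 * t + 2 by ring,
      scoreCount_two_mul_add_two hPQ hQ (k := m - 2 - t) (by omega)]
    have h₁ := Nat.choose_le_choose_succ (n := #(P ∪ Q)ᶜ) (k := m - 2 - t) (by omega)
    have h₂ := Nat.choose_succ_le_choose (n := #P) (k := t) (by omega)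
    nlinarith
  · rcases (show t + 1 = m ∨ t + 2 ≤ m by omega) with rfl | htm
    · rw [show 2 * t + 1 + 1 = 2 * (t + 1) by ring, scoreCount_two_mul hPQ,
        scoreCount_two_mul_add_one hPQ hQ (k := 0) rfl, Nat.choose_zero_right]
      have := Nat.choose_succ_le_choose (n := #P) (k := t) (by omega)
      omega
    · rw [scoreCount_two_mul_add_two hPQ hQ (k := m - 2 - t) (by omega),
        scoreCount_two_mul_add_one hPQ hQ (k := m - 2 - t + 1) (by omega)]
      have h₁ := Nat.choose_le_choose_succ (n := #(P ∪ Q)ᶜ) (k := m - 2 - t) (by omega)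
      have h₂ := Nat.choose_succ_le_choose (n := #P) (k := t) (by omega)
      nlinarith

theorem scoreCount_antitoneOn (hPQ : Disjoint P Q) (hQ : #Q = 2) {m : ℕ}
    (hα : Fintype.card α = 2 * m) : AntitoneOn (scoreCount P Q m) (Set.Ici (#P + 1)) :=
  antitoneOn_nat_Ici_of_succ_le fun _ hs => scoreCount_succ_le hPQ hQ hα hs

end BlockCount

section Experiment

variable {n m : ℕ}

def treatedSet (z : Fin n → Bool) : Finset (Fin n) := {j | z j = true}

def bothOnes (w : Fin n → Bool × Bool) : Finset (Fin n) := {j | w j = (true, true)}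

def discordant (w : Fin n → Bool × Bool) : Finset (Fin n) := {j | (w j).1 ≠ (w j).2}

theorem disjoint_bothOnes_discordant (w : Fin n → Bool × Bool) :
    Disjoint (bothOnes w) (discordant w) := by
  simp +contextual [bothOnes, discordant, disjoint_filter]

theorem card_discordant (w : Fin n → Bool × Bool) :
    #(discordant w) = vcount n w true false + vcount n w false true := by
  rw [vcount, vcount, ← card_union_of_disjoint (disjoint_filter.2 fun j _ h₁ h₂ => by
    simp_all), ← filter_or]
  congr 1
  ext j
  simp only [discordant, mem_filter, mem_univ, true_and]
  generalize w j = p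
  rcases p with ⟨_ | _, _ | _⟩ <;> simp

theorem card_filter_Assign (p : Finset (Fin n) → Prop) [DecidablePred p] :
    #{z ∈ Assign n m | p (treatedSet z)} = #{T : Finset (Fin n) | #T = m ∧ p T} := by
  refine card_nbij' treatedSet (fun T j => decide (j ∈ T)) ?_ ?_ ?_ ?_
  · intro z hz
    simp only [Assign, coe_filter, mem_filter, mem_univ, true_and] at hz ⊢
    exact hz
  · intro T hT
    simp only [Assign, coe_filter, mem_filter, mem_univ, true_and] at hT ⊢
    simpa [treatedSet] using hT
  · intro z _
    funext j
    simp [treatedSet]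
  · intro T _
    ext j
    simp [treatedSet]

theorem sum_b2r_add_b2r (w : Fin n → Bool × Bool) (T : Finset (Fin n)) :
    ∑ j ∈ T, (b2r (w j).1 + b2r (w j).2) = score (bothOnes w) (discordant w) T := by
  simp only [score, bothOnes, discordant, inter_filter, inter_univ]
  push_cast [natCast_card_filter]
  rw [mul_sum, ← sum_add_distrib]
  refine sum_congr rfl fun j _ => ?_
  generalize w j = p
  rcases p with ⟨_ | _, _ | _⟩ <;> norm_num [b2r]

theorem sum_b2r_fst (w : Fin n → Bool × Bool) :
    ∑ j, b2r (w j).1 = #{j | (w j).1 = true} := by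
  simp [b2r, sum_boole]

theorem neyman_obsOutcome (hn : n = 2 * m) (w : Fin n → Bool × Bool) (z : Fin n → Bool) :
    neyman n m (obsOutcome n w z) z
      = (score (bothOnes w) (discordant w) (treatedSet z) - ∑ j, b2r (w j).1) / m := by
  have hnm : (n : ℝ) - m = m := by rw [hn]; push_cast; ring
  unfold obsOutcome
  rw [neyman, hnm, ← sub_div, ← sum_b2r_add_b2r, treatedSet, sum_filter, ← sum_sub_distrib,
    ← sum_sub_distrib]
  congr 1
  refine sum_congr rfl fun j _ => ?_
  cases z j <;> simp

theorem neyman_obsOutcome_compl (hn : n = 2 * m) (w : Fin n → Bool × Bool)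
    (z : Fin n → Bool) :
    neyman n m (obsOutcome n w fun j => !z j) (fun j => !z j)
      = 2 * sate n w - neyman n m (obsOutcome n w z) z := by
  have hnm : (n : ℝ) - m = m := by rw [hn]; push_cast; ring
  have hn' : (n : ℝ) = 2 * m := by rw [hn]; push_cast; ring
  rw [eq_sub_iff_add_eq, neyman, neyman, sate, hnm, hn', ← mul_div_assoc,
    mul_div_mul_left _ _ two_ne_zero, div_sub_div_same, div_sub_div_same, ← add_div,
    ← sum_sub_distrib, ← sum_sub_distrib, ← sum_add_distrib]
  congr 1
  refine sum_congr rfl fun j _ => ?_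
  cases h : z j <;> simp [obsOutcome, h] <;> ring

theorem compl_mem_Assign (hn : n = 2 * m) {z : Fin n → Bool} (hz : z ∈ Assign n m) :
    (fun j => !z j) ∈ Assign n m := by
  simp only [Assign, mem_filter, mem_univ, true_and] at hz ⊢
  have := card_filter_add_card_filter_not (s := univ) (fun j => z j = true)
  simp only [Bool.not_eq_true, Bool.not_eq_eq_eq_not, Bool.not_true, card_univ,
    Fintype.card_fin] at this ⊢
  omega

theorem pmfT_two_mul_sate_sub (hn : n = 2 * m) (w : Fin n → Bool × Bool) (t : ℝ) :
    pmfT n m w (2 * sate n w - t) = pmfT n m w t := by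
  unfold pmfT Pr
  congr 2
  refine card_nbij' (fun z j => !z j) (fun z j => !z j) ?_ ?_ ?_ ?_
  · intro z hz
    simp only [coe_filter] at hz ⊢
    exact ⟨compl_mem_Assign hn hz.1, by rw [neyman_obsOutcome_compl hn, hz.2]; ring⟩
  · intro z hz
    simp only [coe_filter] at hz ⊢
    exact ⟨compl_mem_Assign hn hz.1, by rw [neyman_obsOutcome_compl hn, hz.2]⟩
  · intro z _
    simp
  · intro z _
    simp

theorem pmfT_eq_scoreCount (hm : 0 < m) (hn : n = 2 * m) (w : Fin n → Bool × Bool) (s : ℕ) :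
    pmfT n m w ((s - ∑ j, b2r (w j).1) / m)
      = scoreCount (bothOnes w) (discordant w) m s / #(Assign n m) := by
  unfold pmfT Pr
  rw [scoreCount, ← card_filter_Assign]
  congr 3
  refine filter_congr fun z _ => ?_
  rw [neyman_obsOutcome hn, div_left_inj' (by positivity), sub_left_inj, Nat.cast_inj]

theorem pmfT_intCast_div_le (hm : 0 < m) (hn : n = 2 * m) (w : Fin n → Bool × Bool)
    (hQ : #(discordant w) = 2) {k₁ k₂ : ℤ} (h₁ : sate n w ≤ k₁ / m) (h₁₂ : k₁ ≤ k₂) :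
    pmfT n m w (k₂ / m) ≤ pmfT n m w (k₁ / m) := by
  set W := #{j | (w j).1 = true}
  have hmR : (0 : ℝ) < m := by positivity
  have hsate : 2 * m * sate n w = 2 * #(bothOnes w) + 2 - 2 * W := by
    have hsum := sum_b2r_add_b2r w univ
    rw [score, univ_inter, univ_inter, hQ, sum_add_distrib, sum_b2r_fst] at hsum
    have hnR : (n : ℝ) = 2 * m := by rw [hn]; push_cast; ring
    rw [sate, sum_sub_distrib, hnR, sum_b2r_fst]
    push_cast at hsum
    field_simp
    linarith
  have hW : (#(bothOnes w) + 1 : ℤ) ≤ W + k₁ := by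
    have : 2 * m * sate n w ≤ 2 * k₁ := by
      rw [le_div_iff₀ hmR] at h₁
      linarith
    rw [hsate] at this
    exact_mod_cast (by linarith : (#(bothOnes w) + 1 : ℝ) ≤ W + k₁)
  have hdiv : ∀ (k : ℤ) (s : ℕ), (s : ℤ) = W + k →
      (k : ℝ) / m = (s - ∑ j, b2r (w j).1) / m := by
    intro k s hs
    rw [sum_b2r_fst, (by exact_mod_cast hs : (s : ℝ) = W + k)]
    ring
  obtain ⟨s₁, hs₁⟩ : ∃ s : ℕ, (s : ℤ) = W + k₁ := ⟨_, Int.toNat_of_nonneg (by omega)⟩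
  obtain ⟨s₂, hs₂⟩ : ∃ s : ℕ, (s : ℤ) = W + k₂ := ⟨_, Int.toNat_of_nonneg (by omega)⟩
  rw [hdiv k₁ s₁ hs₁, hdiv k₂ s₂ hs₂, pmfT_eq_scoreCount hm hn, pmfT_eq_scoreCount hm hn]
  gcongr
  exact scoreCount_antitoneOn (disjoint_bothOnes_discordant w) hQ (by simp [hn])
    (by simp; omega) (by simp; omega) (by omega)

end Experiment

/-- In a balanced design, for a count vector of the form
`v = (v₁₁, 1, 1, v₀₀)` or `v = (v₁₁, 0, 2, v₀₀)`, the pmf of `T(v, Z)` is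
symmetric–decreasing on the lattice `m⁻¹ℤ`. -/
theorem stmt15 (m : ℕ) (hm : 0 < m) (n : ℕ) (hn : n = 2 * m)
    (w : Fin n → Bool × Bool)
    (h : (vcount n w true false = 1 ∧ vcount n w false true = 1) ∨
      (vcount n w true false = 0 ∧ vcount n w false true = 2)) :
    SDon (pmfT n m w) (lattZ m) (sate n w) := by
  have hQ : #(discordant w) = 2 := by rw [card_discordant]; omega
  refine ⟨fun x _ => ?_, fun x y hx hxy ⟨k₁, hk₁⟩ ⟨k₂, hk₂⟩ => ?_⟩
  · rw [← pmfT_two_mul_sate_sub hn w (sate n w + x)]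
    ring_nf
  · have hmR : (0 : ℝ) < m := by positivity
    rw [hk₁, hk₂]
    refine pmfT_intCast_div_le hm hn w hQ (by linarith) ?_
    exact_mod_cast (div_le_div_iff_of_pos_right hmR).1 (by linarith : (k₁ : ℝ) / m ≤ k₂ / m)
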